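/- arXiv:2010.14603 — 3 statements merged into one kernel-verified Lean document; each statement's English description precedes it below -/
import Mathlib

section
/- Under the assumption that every transition into an unsafe state has probability either 0 or strictly greater than ε (Assumption 2), and Q satisfies the safety Bellman equation with γ = 1, any state-action pair (s,a) with Q(s,a) < ε has zero probability of transitioning directly to an unsafe state: P(s'|s,a) = 0 for all s' with I(s')=1. -/
/-- Under Assumption 2 (every transition into an unsafe state has
probability 0 or strictly greater than ε), with `Q ≥ 0` satisfying the safety
Bellman equation with `γ = 1`, any pair `(s,a)` with `Q(s,a) < ε` has zero
probability of transitioning directly to an unsafe state. -/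
theorem stmt_5 {S A : Type*} [Fintype S] [Fintype A]
    (I : S → ℝ) (hI : ∀ s, I s = 0 ∨ I s = 1)
    (P : S → A → S → ℝ) (hP0 : ∀ s a s', 0 ≤ P s a s') (hP1 : ∀ s a, ∑ s', P s a s' = 1)
    (π : S → A → ℝ) (hπ0 : ∀ s a, 0 ≤ π s a) (hπ1 : ∀ s, ∑ a, π s a = 1)
    (ε : ℝ) (hε0 : 0 < ε) (hε1 : ε < 1)
    (Q : S → A → ℝ) (hQnn : ∀ s a, 0 ≤ Q s a)
    (hQ : ∀ s a, Q s a = I s + (1 - I s) * ∑ s', P s a s' * ∑ a', π s' a' * Q s' a')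
    (hA2 : ∀ s', I s' = 1 → ∀ s a, P s a s' = 0 ∨ ε < P s a s') :
    ∀ s a, Q s a < ε → ∀ s', I s' = 1 → P s a s' = 0 := by
  intro s a hQs s' hs'
  -- Unsafe states have Q = 1, so V(s') = 1
  have hQ1 : ∀ a', Q s' a' = 1 := by
    intro a'
    have := hQ s' a'
    rw [hs'] at this; simpa using this
  have hV : (∑ a', π s' a' * Q s' a') = 1 := by
    simp only [hQ1, mul_one]; exact hπ1 s'
  -- I s = 0, since otherwise Q s a = 1 ≥ ε
  have hIs : I s = 0 := by
    rcases hI s with h | h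
    · exact h
    · exfalso
      have := hQ s a
      rw [h] at this; simp at this
      linarith
  -- Q s a = ∑ P * V ≥ P s a s' * 1
  have hge : P s a s' ≤ Q s a := by
    rw [hQ s a, hIs]
    simp only [zero_add, sub_zero, one_mul]
    calc P s a s' = P s a s' * ∑ a', π s' a' * Q s' a' := by rw [hV, mul_one]
      _ ≤ ∑ t, P s a t * ∑ a', π t a' * Q t a' := by
          apply Finset.single_le_sum (f := fun t => P s a t * ∑ a', π t a' * Q t a')
          · intro t _
            exact mul_nonneg (hP0 s a t)
              (Finset.sum_nonneg fun a' _ => mul_nonneg (hπ0 t a') (hQnn t a'))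
          · exact Finset.mem_univ s'
  rcases hA2 s' hs' s a with h | h
  · exact h
  · linarith
end

section
/- Let Q₁, Q₂ : S × A → [0,1] satisfy the safety Bellman equation under policies π₁ and π₂ respectively (same P, I, γ < 1). Then ‖Q₁ - Q₂‖_∞ ≤ (γ/(1-γ)) · max_{s'} ‖π₁(·|s') - π₂(·|s')‖_TV, where ‖·‖_TV is total variation distance (here using the bound |E_{a'∼π₁}Q₁ - E_{a'∼π₂}Q₁| ≤ TV distance since Q₁ ∈ [0,1]). -/
/-!
Let `D` be the largest entry of `|Q₁ - Q₂|`. At every successor state the two values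
`∑ π₁ Q₁` and `∑ π₂ Q₂` differ by at most `tv + D`: swap the policy with `Q₁` as a
`[0,1]`-valued test function, then swap `Q₁` for `Q₂` under `π₂`. The Bellman equation
averages this over `P` and multiplies by `(1 - I) γ ≤ γ`, so `D ≤ γ (T + D)` with
`T = ⨆ tv`, which rearranges to `D ≤ γ / (1 - γ) · T`.
-/

open Finset

section

variable {ι : Type*} [Fintype ι]

noncomputable def tvDist (p q : ι → ℝ) : ℝ :=
  ⨆ f : {f : ι → ℝ // ∀ i, f i ∈ Set.Icc (0:ℝ) 1}, |(∑ i, p i * f.1 i) - ∑ i, q i * f.1 i|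

theorem abs_sum_mul_le_of_abs_le {w f : ι → ℝ} {c : ℝ} (hw0 : ∀ i, 0 ≤ w i)
    (hw1 : ∑ i, w i = 1) (hf : ∀ i, |f i| ≤ c) : |∑ i, w i * f i| ≤ c :=
  calc |∑ i, w i * f i| ≤ ∑ i, |w i * f i| := abs_sum_le_sum_abs _ _
    _ = ∑ i, w i * |f i| := by simp only [abs_mul, abs_of_nonneg (hw0 _)]
    _ ≤ ∑ i, w i * c := sum_le_sum fun i _ => mul_le_mul_of_nonneg_left (hf i) (hw0 i)
    _ = c := by rw [← sum_mul, hw1, one_mul]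

section Distributions

variable {p q : ι → ℝ} (hp0 : ∀ i, 0 ≤ p i) (hp1 : ∑ i, p i = 1)
  (hq0 : ∀ i, 0 ≤ q i) (hq1 : ∑ i, q i = 1)
include hp0 hp1 hq0 hq1

theorem abs_sum_mul_sub_le_tvDist {f : ι → ℝ} (hf : ∀ i, f i ∈ Set.Icc (0:ℝ) 1) :
    |(∑ i, p i * f i) - ∑ i, q i * f i| ≤ tvDist p q := by
  refine le_ciSup (f := fun g : {g : ι → ℝ // ∀ i, g i ∈ Set.Icc (0:ℝ) 1} =>
    |(∑ i, p i * g.1 i) - ∑ i, q i * g.1 i|) ⟨2, ?_⟩ ⟨f, hf⟩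
  rintro _ ⟨⟨g, hg⟩, rfl⟩
  have hg1 : ∀ i, |g i| ≤ 1 := fun i => abs_le.2 ⟨by linarith [(hg i).1], (hg i).2⟩
  calc _ ≤ |∑ i, p i * g i| + |∑ i, q i * g i| := abs_sub _ _
    _ ≤ 1 + 1 := add_le_add (abs_sum_mul_le_of_abs_le hp0 hp1 hg1)
        (abs_sum_mul_le_of_abs_le hq0 hq1 hg1)
    _ = 2 := by norm_num

theorem abs_sum_mul_sub_sum_mul_le {f g : ι → ℝ} {D : ℝ}
    (hf : ∀ i, f i ∈ Set.Icc (0:ℝ) 1) (hfg : ∀ i, |f i - g i| ≤ D) :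
    |(∑ i, p i * f i) - ∑ i, q i * g i| ≤ tvDist p q + D := by
  have hqfg : |(∑ i, q i * f i) - ∑ i, q i * g i| ≤ D := by
    rw [← sum_sub_distrib]
    simpa only [mul_sub] using abs_sum_mul_le_of_abs_le hq0 hq1 hfg
  calc _ ≤ |(∑ i, p i * f i) - ∑ i, q i * f i| + |(∑ i, q i * f i) - ∑ i, q i * g i| :=
        abs_sub_le _ _ _
    _ ≤ tvDist p q + D := add_le_add (abs_sum_mul_sub_le_tvDist hp0 hp1 hq0 hq1 hf) hqfg

end Distributions

theorem abs_bellman_sub_le {P v₁ v₂ : ι → ℝ} {i γ c : ℝ} (hi : i = 0 ∨ i = 1) (hγ : 0 ≤ γ)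
    (hP0 : ∀ s, 0 ≤ P s) (hP1 : ∑ s, P s = 1) (hv : ∀ s, |v₁ s - v₂ s| ≤ c) :
    |(i + (1 - i) * γ * ∑ s, P s * v₁ s) - (i + (1 - i) * γ * ∑ s, P s * v₂ s)| ≤ γ * c := by
  have hPv : |∑ s, P s * (v₁ s - v₂ s)| ≤ c := abs_sum_mul_le_of_abs_le hP0 hP1 hv
  rcases hi with rfl | rfl
  · simpa only [add_sub_add_left_eq_sub, sub_zero, one_mul, ← mul_sub, ← sum_sub_distrib,
      abs_mul, abs_of_nonneg hγ] using mul_le_mul_of_nonneg_left hPv hγ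
  · simpa using mul_nonneg hγ ((abs_nonneg _).trans hPv)

end

theorem stmt_7_general {S A : Type*} [Fintype S] [Fintype A]
    (I : S → ℝ) (hI : ∀ s, I s = 0 ∨ I s = 1)
    (P : S → A → S → ℝ) (hP0 : ∀ s a s', 0 ≤ P s a s') (hP1 : ∀ s a, ∑ s', P s a s' = 1)
    (π₁ π₂ : S → A → ℝ)
    (hπ₁0 : ∀ s a, 0 ≤ π₁ s a) (hπ₁1 : ∀ s, ∑ a, π₁ s a = 1)
    (hπ₂0 : ∀ s a, 0 ≤ π₂ s a) (hπ₂1 : ∀ s, ∑ a, π₂ s a = 1)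
    (γ : ℝ) (hγ0 : 0 < γ) (hγ1 : γ < 1)
    (Q₁ Q₂ : S → A → ℝ)
    (hQ₁mem : ∀ s a, Q₁ s a ∈ Set.Icc (0:ℝ) 1)
    (hQ₁ : ∀ s a, Q₁ s a = I s + (1 - I s) * γ * ∑ s', P s a s' * ∑ a', π₁ s' a' * Q₁ s' a')
    (hQ₂ : ∀ s a, Q₂ s a = I s + (1 - I s) * γ * ∑ s', P s a s' * ∑ a', π₂ s' a' * Q₂ s' a')
    (tv : S → ℝ)
    (htv : ∀ s', tv s' = ⨆ f : {f : A → ℝ // ∀ a, f a ∈ Set.Icc (0:ℝ) 1},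
      |(∑ a, π₁ s' a * f.1 a) - ∑ a, π₂ s' a * f.1 a|) :
    ∀ s a, |Q₁ s a - Q₂ s a| ≤ γ / (1 - γ) * ⨆ s', tv s' := by
  intro s a
  have : Nonempty (S × A) := ⟨(s, a)⟩
  obtain ⟨⟨s₀, a₀⟩, hmax⟩ := Finite.exists_max fun x : S × A => |Q₁ x.1 x.2 - Q₂ x.1 x.2|
  set D := |Q₁ s₀ a₀ - Q₂ s₀ a₀|
  set T := ⨆ s', tv s'
  have hvalue : ∀ s', |(∑ a', π₁ s' a' * Q₁ s' a') - ∑ a', π₂ s' a' * Q₂ s' a'| ≤ T + D :=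
    fun s' => (abs_sum_mul_sub_sum_mul_le (hπ₁0 s') (hπ₁1 s') (hπ₂0 s') (hπ₂1 s')
      (hQ₁mem s') fun a' => hmax (s', a')).trans
      (add_le_add_left ((htv s').ge.trans (le_ciSup (Set.finite_range tv).bddAbove s')) D)
  have hcontract : D ≤ γ * (T + D) := by
    simpa only [D, ← hQ₁, ← hQ₂] using
      abs_bellman_sub_le (hI s₀) hγ0.le (hP0 s₀ a₀) (hP1 s₀ a₀) hvalue
  calc |Q₁ s a - Q₂ s a| ≤ D := hmax (s, a)
    _ ≤ γ / (1 - γ) * T := by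
      rw [div_mul_eq_mul_div, le_div_iff₀ (by linarith)]
      linarith

/-- If `Q₁, Q₂ : S × A → [0,1]` satisfy the safety Bellman equation
under policies `π₁`, `π₂` respectively (same `P`, `I`, `γ < 1`), then
`‖Q₁ - Q₂‖_∞ ≤ (γ/(1-γ)) · max_{s'} ‖π₁(·|s') - π₂(·|s')‖_TV`, where total
variation distance is the sup over `[0,1]`-valued test functions. -/
theorem stmt_7 {S A : Type*} [Fintype S] [Fintype A] [Nonempty S]
    (I : S → ℝ) (hI : ∀ s, I s = 0 ∨ I s = 1)
    (P : S → A → S → ℝ) (hP0 : ∀ s a s', 0 ≤ P s a s') (hP1 : ∀ s a, ∑ s', P s a s' = 1)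
    (π₁ π₂ : S → A → ℝ)
    (hπ₁0 : ∀ s a, 0 ≤ π₁ s a) (hπ₁1 : ∀ s, ∑ a, π₁ s a = 1)
    (hπ₂0 : ∀ s a, 0 ≤ π₂ s a) (hπ₂1 : ∀ s, ∑ a, π₂ s a = 1)
    (γ : ℝ) (hγ0 : 0 < γ) (hγ1 : γ < 1)
    (Q₁ Q₂ : S → A → ℝ)
    (hQ₁mem : ∀ s a, Q₁ s a ∈ Set.Icc (0:ℝ) 1)
    (hQ₂mem : ∀ s a, Q₂ s a ∈ Set.Icc (0:ℝ) 1)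
    (hQ₁ : ∀ s a, Q₁ s a = I s + (1 - I s) * γ * ∑ s', P s a s' * ∑ a', π₁ s' a' * Q₁ s' a')
    (hQ₂ : ∀ s a, Q₂ s a = I s + (1 - I s) * γ * ∑ s', P s a s' * ∑ a', π₂ s' a' * Q₂ s' a')
    (tv : S → ℝ)
    (htv : ∀ s', tv s' = ⨆ f : {f : A → ℝ // ∀ a, f a ∈ Set.Icc (0:ℝ) 1},
      |(∑ a, π₁ s' a * f.1 a) - ∑ a, π₂ s' a * f.1 a|) :
    ∀ s a, |Q₁ s a - Q₂ s a| ≤ γ / (1 - γ) * ⨆ s', tv s' :=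
  stmt_7_general I hI P hP0 hP1 π₁ π₂ hπ₁0 hπ₁1 hπ₂0 hπ₂1 γ hγ0 hγ1 Q₁ Q₂ hQ₁mem hQ₁ hQ₂ tv htv
end

section
/- Let V : S → [0,1] satisfy V(s) ≤ ε for all s in a set G of 'good' states, where V(s) = Pr over one step of (γ·(failure indicator) + γ·(stay-in-G continuation bounded by V)). Formally: if for all s ∈ G, γ·(p_fail(s) + E[V(s') · 𝟙(s' ∈ G)]) ≤ V(s) ≤ ε with γ = 1 and p_fail(s) = Pr(s' unsafe | s), and trajectories never leave G ∪ {unsafe}, then the probability of ever failing starting from G is at most ε. -/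
/-!
By induction on the horizon `n`, `Hit n ≤ V` on `G`: from a state of `G` the chain moves only
into `U`, where `Hit` is identically `1`, or into `G`, where `Hit n ≤ V` by induction; so
`Hit (n+1) s ≤ p_fail(s) + ∑_{s' ∈ G} P(s,s') V(s') ≤ V(s) ≤ ε`.
-/

open Finset

theorem sum_eq_sum_add_sum_of_eq_zero {S : Type*} [Fintype S] [DecidableEq S] {U G : Finset S}
    (hUG : Disjoint U G) {g : S → ℝ} (hg : ∀ s ∉ U ∪ G, g s = 0) :
    ∑ s, g s = ∑ u ∈ U, g u + ∑ s ∈ G, g s := by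
  rw [← sum_union hUG]
  exact (sum_subset (subset_univ _) fun s _ hs => hg s hs).symm

theorem eq_zero_of_pos_imp_mem {S : Type*} [DecidableEq S] {U G : Finset S} {p : S → ℝ}
    (hp0 : ∀ s, 0 ≤ p s) (hp : ∀ s, 0 < p s → s ∈ G ∨ s ∈ U) (s : S) (hs : s ∉ U ∪ G) :
    p s = 0 := by
  refine (hp0 s).eq_or_lt.elim Eq.symm fun hpos => absurd ?_ hs
  exact mem_union.2 (hp s hpos).symm

section HittingProbability

variable {S : Type*} [Fintype S] [DecidableEq S] {U G : Finset S} {P : S → S → ℝ}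
  {Hit : ℕ → S → ℝ}

theorem hit_eq_one_of_mem (hHit0 : ∀ s, Hit 0 s = if s ∈ U then 1 else 0)
    (hHits : ∀ n s, Hit (n + 1) s = if s ∈ U then 1 else ∑ s', P s s' * Hit n s')
    {u : S} (hu : u ∈ U) : ∀ n, Hit n u = 1
  | 0 => by rw [hHit0, if_pos hu]
  | n + 1 => by rw [hHits, if_pos hu]

theorem hit_le_of_supermartingale (hUG : Disjoint U G) (hP0 : ∀ s s', 0 ≤ P s s')
    (hclosed : ∀ s ∈ G, ∀ s', 0 < P s s' → s' ∈ G ∨ s' ∈ U)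
    {V : S → ℝ} (hV0 : ∀ s, 0 ≤ V s)
    (hsuper : ∀ s ∈ G, (∑ u ∈ U, P s u) + ∑ s' ∈ G, P s s' * V s' ≤ V s)
    (hHit0 : ∀ s, Hit 0 s = if s ∈ U then 1 else 0)
    (hHits : ∀ n s, Hit (n + 1) s = if s ∈ U then 1 else ∑ s', P s s' * Hit n s') :
    ∀ n, ∀ s ∈ G, Hit n s ≤ V s := by
  have not_mem_U {s} (hs : s ∈ G) : s ∉ U := fun hU => disjoint_left.1 hUG hU hs
  intro n
  induction n with
  | zero =>
    intro s hs
    rw [hHit0, if_neg (not_mem_U hs)]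
    exact hV0 s
  | succ n ih =>
    intro s hs
    have hsplit : ∑ s', P s s' * Hit n s' =
        ∑ u ∈ U, P s u * Hit n u + ∑ s' ∈ G, P s s' * Hit n s' :=
      sum_eq_sum_add_sum_of_eq_zero hUG fun s' hs' => by
        rw [eq_zero_of_pos_imp_mem (hP0 s) (hclosed s hs) s' hs', zero_mul]
    have hU : ∑ u ∈ U, P s u * Hit n u = ∑ u ∈ U, P s u :=
      sum_congr rfl fun u hu => by rw [hit_eq_one_of_mem hHit0 hHits hu, mul_one]
    have hG : ∑ s' ∈ G, P s s' * Hit n s' ≤ ∑ s' ∈ G, P s s' * V s' :=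
      sum_le_sum fun s' hs' => mul_le_mul_of_nonneg_left (ih s' hs') (hP0 s s')
    calc Hit (n + 1) s = ∑ u ∈ U, P s u * Hit n u + ∑ s' ∈ G, P s s' * Hit n s' := by
          rw [hHits, if_neg (not_mem_U hs), hsplit]
      _ ≤ (∑ u ∈ U, P s u) + ∑ s' ∈ G, P s s' * V s' := by rw [hU]; gcongr
      _ ≤ V s := hsuper s hs

end HittingProbability

theorem stmt_14_general {S : Type*} [Fintype S] [DecidableEq S]
    (U G : Finset S) (hUG : Disjoint U G)
    (P : S → S → ℝ) (hP0 : ∀ s s', 0 ≤ P s s')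
    (hclosed : ∀ s ∈ G, ∀ s', 0 < P s s' → s' ∈ G ∨ s' ∈ U)
    (ε : ℝ)
    (V : S → ℝ) (hV01 : ∀ s, V s ∈ Set.Icc (0:ℝ) 1)
    (hsuper : ∀ s ∈ G, (∑ u ∈ U, P s u) + ∑ s' ∈ G, P s s' * V s' ≤ V s)
    (hVε : ∀ s ∈ G, V s ≤ ε)
    (Hit : ℕ → S → ℝ)
    (hHit0 : ∀ s, Hit 0 s = if s ∈ U then 1 else 0)
    (hHits : ∀ n s, Hit (n+1) s = if s ∈ U then 1 else ∑ s', P s s' * Hit n s') :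
    ∀ s ∈ G, ∀ n, Hit n s ≤ ε := fun s hs n =>
  (hit_le_of_supermartingale hUG hP0 hclosed (fun s => (hV01 s).1) hsuper hHit0 hHits n s hs).trans
    (hVε s hs)

/-- Supermartingale safety bound. If `V : S → [0,1]` satisfies, on a
good set `G` (from which the chain only moves into `G` or the absorbing unsafe
set `U`), `p_fail(s) + ∑_{s'∈G} P(s,s')·V(s') ≤ V(s) ≤ ε`, then the probability
of ever hitting `U` from `G` (its finite-horizon truncations `Hit n`) is ≤ `ε`. -/
theorem stmt_14 {S : Type*} [Fintype S] [DecidableEq S]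
    (U G : Finset S) (hUG : Disjoint U G)
    (P : S → S → ℝ) (hP0 : ∀ s s', 0 ≤ P s s') (hP1 : ∀ s, ∑ s', P s s' = 1)
    (hclosed : ∀ s ∈ G, ∀ s', 0 < P s s' → s' ∈ G ∨ s' ∈ U)
    (habs : ∀ u ∈ U, ∀ s', 0 < P u s' → s' ∈ U)
    (ε : ℝ) (hε : 0 ≤ ε)
    (V : S → ℝ) (hV01 : ∀ s, V s ∈ Set.Icc (0:ℝ) 1)
    (hsuper : ∀ s ∈ G, (∑ u ∈ U, P s u) + ∑ s' ∈ G, P s s' * V s' ≤ V s)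
    (hVε : ∀ s ∈ G, V s ≤ ε)
    (Hit : ℕ → S → ℝ)
    (hHit0 : ∀ s, Hit 0 s = if s ∈ U then 1 else 0)
    (hHits : ∀ n s, Hit (n+1) s = if s ∈ U then 1 else ∑ s', P s s' * Hit n s') :
    ∀ s ∈ G, ∀ n, Hit n s ≤ ε :=
  stmt_14_general U G hUG P hP0 hclosed ε V hV01 hsuper hVε Hit hHit0 hHits
end
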